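/- Let n ≥ 1, t > 0, α > 1, and let f : ℝⁿ → ℝ be a nonnegative bounded measurable function. Then for all x, y ∈ ℝⁿ, (P_t f(x))^α ≤ P_t(f^α)(y) · exp(α‖x−y‖²/(2(α−1)(e^{2t}−1))). -/

import Mathlib

open MeasureTheory Real
open scoped RealInnerProductSpace ENNReal

/-- The standard Gaussian probability measure on ℝⁿ. -/
noncomputable def gaussMeasure (n : ℕ) : Measure (EuclideanSpace ℝ (Fin n)) :=
  volume.withDensity
    (fun z => ENNReal.ofReal ((2 * π) ^ (-(n : ℝ) / 2) * Real.exp (-‖z‖ ^ 2 / 2)))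

/-- The Ornstein–Uhlenbeck semigroup via the Mehler formula:
`P_t f(x) = ∫ f(e^{-t} x + √(1-e^{-2t}) z) dγ(z)`. -/
noncomputable def ouSG (n : ℕ) (t : ℝ) (f : EuclideanSpace ℝ (Fin n) → ℝ)
    (x : EuclideanSpace ℝ (Fin n)) : ℝ :=
  ∫ z, f (Real.exp (-t) • x + Real.sqrt (1 - Real.exp (-2 * t)) • z) ∂(gaussMeasure n)

section helpers

lemma meas_inner_r (n : ℕ) (w : EuclideanSpace ℝ (Fin n)) :
    Measurable fun z : EuclideanSpace ℝ (Fin n) => (⟪w, z⟫ : ℝ) :=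
  (continuous_const.inner continuous_id).measurable

lemma gauss_dens_meas (n : ℕ) :
    Measurable (fun z : EuclideanSpace ℝ (Fin n) =>
      ENNReal.ofReal ((2 * π) ^ (-(n : ℝ) / 2) * rexp (-‖z‖ ^ 2 / 2))) := by
  apply Measurable.ennreal_ofReal
  exact measurable_const.mul (Real.measurable_exp.comp
    (((measurable_norm.pow_const 2).neg).div_const 2))

lemma integrable_gauss_lin (n : ℕ) (w : EuclideanSpace ℝ (Fin n)) (c : ℝ) :
    Integrable (fun z : EuclideanSpace ℝ (Fin n) => rexp (-(1/2) * ‖z‖^2 + c * ⟪w, z⟫)) := by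
  have h := (GaussianFourier.integrable_cexp_neg_mul_sq_norm_add
    (V := EuclideanSpace ℝ (Fin n)) (b := (1/2 : ℂ)) (by norm_num) (c : ℂ) w).norm
  convert h using 2 with z
  rw [show (-(1/2:ℂ)) * (‖z‖:ℂ)^2 + (c:ℂ) * ((⟪w, z⟫ : ℝ) : ℂ)
      = ((-(1/2) * ‖z‖^2 + c * ⟪w, z⟫ : ℝ) : ℂ) by push_cast; ring,
    Complex.norm_exp_ofReal]

lemma gauss_mass (n : ℕ) :
    ∫⁻ z : EuclideanSpace ℝ (Fin n), ENNReal.ofReal (rexp (-‖z‖ ^ 2 / 2))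
      = ENNReal.ofReal ((2*π) ^ ((n:ℝ)/2)) := by
  have hint : Integrable (fun z : EuclideanSpace ℝ (Fin n) => rexp (-(1/2) * ‖z‖^2)) := by
    simpa using integrable_gauss_lin n 0 0
  have h1 : ∫ z : EuclideanSpace ℝ (Fin n), rexp (-(1/2) * ‖z‖^2) = (2*π) ^ ((n:ℝ)/2) := by
    rw [GaussianFourier.integral_rexp_neg_mul_sq_norm (by norm_num : (0:ℝ) < 1/2),
      finrank_euclideanSpace_fin, show π / (1/2) = 2 * π by ring]
  calc ∫⁻ z : EuclideanSpace ℝ (Fin n), ENNReal.ofReal (rexp (-‖z‖ ^ 2 / 2))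
      = ∫⁻ z : EuclideanSpace ℝ (Fin n), ENNReal.ofReal (rexp (-(1/2) * ‖z‖^2)) := by
        simp only [show ∀ z : EuclideanSpace ℝ (Fin n), -‖z‖^2/2 = -(1/2) * ‖z‖^2 from
          fun z => by ring]
    _ = ENNReal.ofReal (∫ z : EuclideanSpace ℝ (Fin n), rexp (-(1/2) * ‖z‖^2)) :=
        (ofReal_integral_eq_lintegral_ofReal hint
          (ae_of_all _ fun z => (Real.exp_pos _).le)).symm
    _ = ENNReal.ofReal ((2*π) ^ ((n:ℝ)/2)) := by rw [h1]

lemma gauss_lintegral (n : ℕ) (k : EuclideanSpace ℝ (Fin n) → ℝ≥0∞) (hk : Measurable k) :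
    ∫⁻ z, k z ∂(gaussMeasure n)
      = ∫⁻ z : EuclideanSpace ℝ (Fin n),
          ENNReal.ofReal ((2 * π) ^ (-(n : ℝ) / 2) * rexp (-‖z‖ ^ 2 / 2)) * k z := by
  rw [gaussMeasure, lintegral_withDensity_eq_lintegral_mul _ (gauss_dens_meas n) hk]
  rfl

lemma gauss_const_mass (n : ℕ) :
    ((2 * π) ^ (-(n : ℝ) / 2) : ℝ) * (2*π) ^ ((n:ℝ)/2) = 1 := by
  rw [← Real.rpow_add (by positivity), show -(n : ℝ) / 2 + (n:ℝ)/2 = 0 by ring,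
    Real.rpow_zero]

lemma lintegral_exp_inner (n : ℕ) (w : EuclideanSpace ℝ (Fin n)) :
    ∫⁻ z, ENNReal.ofReal (rexp ⟪w, z⟫) ∂(gaussMeasure n)
      = ENNReal.ofReal (rexp (‖w‖^2/2)) := by
  have hmeas : Measurable fun z : EuclideanSpace ℝ (Fin n) => ENNReal.ofReal (rexp ⟪w, z⟫) :=
    (Real.measurable_exp.comp (meas_inner_r n w)).ennreal_ofReal
  rw [gauss_lintegral n _ hmeas]
  have hpt : ∀ z : EuclideanSpace ℝ (Fin n),
      ENNReal.ofReal ((2 * π) ^ (-(n : ℝ) / 2) * rexp (-‖z‖ ^ 2 / 2))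
          * ENNReal.ofReal (rexp ⟪w, z⟫)
        = ENNReal.ofReal ((2 * π) ^ (-(n : ℝ) / 2) * rexp (‖w‖^2/2))
            * ENNReal.ofReal (rexp (-‖z - w‖ ^ 2 / 2)) := by
    intro z
    rw [← ENNReal.ofReal_mul (by positivity), ← ENNReal.ofReal_mul (by positivity)]
    congr 1
    rw [mul_assoc, mul_assoc, ← Real.exp_add, ← Real.exp_add]
    congr 2
    rw [norm_sub_sq_real, real_inner_comm z w]
    ring
  simp_rw [hpt]
  rw [lintegral_const_mul _
    (show Measurable fun z : EuclideanSpace ℝ (Fin n) => ENNReal.ofReal (rexp (-‖z - w‖ ^ 2 / 2))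
      from (((((measurable_id'.sub_const w).norm.pow_const 2).neg.div_const 2).exp)).ennreal_ofReal)]
  have htrans : ∫⁻ z : EuclideanSpace ℝ (Fin n), ENNReal.ofReal (rexp (-‖z - w‖ ^ 2 / 2))
      = ∫⁻ z : EuclideanSpace ℝ (Fin n), ENNReal.ofReal (rexp (-‖z‖ ^ 2 / 2)) := by
    have := (measurePreserving_add_right (volume : Measure (EuclideanSpace ℝ (Fin n))) (-w)
      ).lintegral_comp
      (f := fun z : EuclideanSpace ℝ (Fin n) => ENNReal.ofReal (rexp (-‖z‖ ^ 2 / 2)))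
      ((Real.measurable_exp.comp
        ((measurable_norm.pow_const 2).neg.div_const 2)).ennreal_ofReal)
    simpa [sub_eq_add_neg] using this
  rw [htrans, gauss_mass n, ← ENNReal.ofReal_mul (by positivity)]
  congr 1
  rw [show (2 * π) ^ (-(n : ℝ) / 2) * rexp (‖w‖ ^ 2 / 2) * (2 * π) ^ ((n:ℝ)/2)
    = ((2 * π) ^ (-(n : ℝ) / 2) * (2 * π) ^ ((n:ℝ)/2)) * rexp (‖w‖ ^ 2 / 2) by ring,
    gauss_const_mass n, one_mul]

instance gauss_prob (n : ℕ) : IsProbabilityMeasure (gaussMeasure n) := by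
  constructor
  have h := lintegral_exp_inner n (0 : EuclideanSpace ℝ (Fin n))
  simpa [inner_zero_left, lintegral_one] using h

end helpers

/-- Wang's Harnack inequality for the Ornstein–Uhlenbeck semigroup (curvature `CD(1,∞)`,
`σ(t) = e^{2t} - 1`): `(P_t f(x))^α ≤ P_t(f^α)(y) exp(α ‖x-y‖²/(2(α-1)(e^{2t}-1)))`. -/
theorem wang_harnack_ou (n : ℕ) (hn : 1 ≤ n) (t : ℝ) (ht : 0 < t)
    (α : ℝ) (hα : 1 < α)
    (f : EuclideanSpace ℝ (Fin n) → ℝ) (hf : Measurable f) (hf0 : ∀ z, 0 ≤ f z)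
    (C : ℝ) (hfC : ∀ z, f z ≤ C) (x y : EuclideanSpace ℝ (Fin n)) :
    (ouSG n t f x) ^ α ≤
      ouSG n t (fun z => f z ^ α) y *
        Real.exp (α * ‖x - y‖ ^ 2 / (2 * (α - 1) * (Real.exp (2 * t) - 1))) := by
  classical
  have hα0 : (0:ℝ) < α := lt_trans one_pos hα
  have hα1 : (0:ℝ) < α - 1 := by linarith
  have hC0 : 0 ≤ C := le_trans (hf0 0) (hfC 0)
  have hs4 : rexp (-2*t) < 1 := by
    apply Real.exp_lt_one_iff.mpr; linarith
  have hs3 : (0:ℝ) < 1 - rexp (-2*t) := by linarith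
  set s : ℝ := Real.sqrt (1 - rexp (-2*t)) with hs_def
  have hs0 : 0 < s := Real.sqrt_pos.mpr hs3
  have hs2 : s^2 = 1 - rexp (-2*t) := Real.sq_sqrt hs3.le
  set v : EuclideanSpace ℝ (Fin n) := (rexp (-t) / s) • (y - x) with hv_def
  set g : EuclideanSpace ℝ (Fin n) → ℝ := fun z => f (rexp (-t) • y + s • z) with hg_def
  have hsm : Measurable fun z : EuclideanSpace ℝ (Fin n) => rexp (-t) • y + s • z :=
    (measurable_id.const_smul s).const_add _
  have hgmeas : Measurable g := hf.comp hsm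
  have hg0 : ∀ z, 0 ≤ g z := fun z => hf0 _
  have hgC : ∀ z, g z ≤ C := fun z => hfC _
  have hshift : ∀ z : EuclideanSpace ℝ (Fin n), f (rexp (-t) • x + s • z) = g (z - v) := by
    intro z
    have h2 : rexp (-t) • y + s • (z - v) = rexp (-t) • x + s • z := by
      rw [hv_def, smul_sub, smul_smul, mul_div_cancel₀ _ (ne_of_gt hs0)]
      module
    calc f (rexp (-t) • x + s • z) = f (rexp (-t) • y + s • (z - v)) := by rw [h2]
      _ = g (z - v) := rfl
  set ρ : EuclideanSpace ℝ (Fin n) → ℝ := fun z => rexp (-⟪v, z⟫ - ‖v‖^2/2) with hρ_def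
  have hρmeas : Measurable ρ :=
    Real.measurable_exp.comp ((meas_inner_r n v).neg.sub_const _)
  have hρ0 : ∀ z, 0 ≤ ρ z := fun z => (Real.exp_pos _).le
  set q : ℝ := α / (α - 1) with hq_def
  have hq1 : 1 < q := by
    rw [hq_def, lt_div_iff₀ hα1]; linarith
  have hq0 : 0 < q := lt_trans one_pos hq1
  have hconj : α.HolderConjugate q := by
    exact Real.HolderConjugate.conjExponent hα
  have hqm1 : q - 1 = 1 / (α - 1) := by
    rw [hq_def]; field_simp; ring
  set γ := gaussMeasure n with hγ_def
  have hφmeas := gauss_dens_meas n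
  have key : ∫⁻ z, ENNReal.ofReal (f (rexp (-t) • x + s • z)) ∂γ
      = ∫⁻ z, ENNReal.ofReal (g z) * ENNReal.ofReal (ρ z) ∂γ := by
    have hmeas1 : Measurable fun z : EuclideanSpace ℝ (Fin n) => ENNReal.ofReal (g (z - v)) :=
      (hgmeas.comp (measurable_id.sub_const v)).ennreal_ofReal
    have hmeas2 : Measurable fun z : EuclideanSpace ℝ (Fin n) =>
        ENNReal.ofReal (g z) * ENNReal.ofReal (ρ z) :=
      hgmeas.ennreal_ofReal.mul hρmeas.ennreal_ofReal
    calc ∫⁻ z, ENNReal.ofReal (f (rexp (-t) • x + s • z)) ∂γ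
        = ∫⁻ z, ENNReal.ofReal (g (z - v)) ∂γ := by simp_rw [hshift]
      _ = ∫⁻ z : EuclideanSpace ℝ (Fin n),
            ENNReal.ofReal ((2 * π) ^ (-(n : ℝ) / 2) * rexp (-‖z‖ ^ 2 / 2))
            * ENNReal.ofReal (g (z - v)) := gauss_lintegral n _ hmeas1
      _ = ∫⁻ z : EuclideanSpace ℝ (Fin n),
            ENNReal.ofReal ((2 * π) ^ (-(n : ℝ) / 2) * rexp (-‖z + v‖ ^ 2 / 2))
            * ENNReal.ofReal (g z) := by
          have := (measurePreserving_add_right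
              (volume : Measure (EuclideanSpace ℝ (Fin n))) v).lintegral_comp
            (f := fun z : EuclideanSpace ℝ (Fin n) =>
              ENNReal.ofReal ((2 * π) ^ (-(n : ℝ) / 2) * rexp (-‖z‖ ^ 2 / 2))
              * ENNReal.ofReal (g (z - v)))
            (hφmeas.mul hmeas1)
          simp only [add_sub_cancel_right] at this
          rw [← this]
      _ = ∫⁻ z : EuclideanSpace ℝ (Fin n),
            ENNReal.ofReal ((2 * π) ^ (-(n : ℝ) / 2) * rexp (-‖z‖ ^ 2 / 2))
            * (ENNReal.ofReal (g z) * ENNReal.ofReal (ρ z)) := by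
          congr 1 with z
          have hexp : (2 * π) ^ (-(n : ℝ) / 2) * rexp (-‖z + v‖ ^ 2 / 2)
              = ((2 * π) ^ (-(n : ℝ) / 2) * rexp (-‖z‖ ^ 2 / 2)) * ρ z := by
            simp only [hρ_def]
            rw [mul_assoc, ← Real.exp_add]
            congr 2
            rw [norm_add_sq_real, real_inner_comm z v]
            ring
          rw [hexp, ENNReal.ofReal_mul (by positivity)]
          ring
      _ = ∫⁻ z, ENNReal.ofReal (g z) * ENNReal.ofReal (ρ z) ∂γ :=
          (gauss_lintegral n _ hmeas2).symm
  have holder : ∫⁻ z, ENNReal.ofReal (g z) * ENNReal.ofReal (ρ z) ∂γ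
      ≤ (∫⁻ z, ENNReal.ofReal (g z) ^ α ∂γ) ^ (1/α)
        * (∫⁻ z, ENNReal.ofReal (ρ z) ^ q ∂γ) ^ (1/q) := by
    have := ENNReal.lintegral_mul_le_Lp_mul_Lq γ hconj
      hgmeas.ennreal_ofReal.aemeasurable hρmeas.ennreal_ofReal.aemeasurable
    simpa using this
  have hintf : Integrable (fun z => f (rexp (-t) • y + s • z) ^ α) γ := by
    refine Integrable.mono' (integrable_const (C ^ α)) ?_ (ae_of_all _ fun z => ?_)
    · exact (hgmeas.pow_const α).aestronglyMeasurable
    · rw [Real.norm_of_nonneg (Real.rpow_nonneg (hg0 z) α)]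
      exact Real.rpow_le_rpow (hg0 z) (hgC z) hα0.le
  have hB0 : 0 ≤ ouSG n t (fun z => f z ^ α) y :=
    integral_nonneg fun z => Real.rpow_nonneg (hf0 _) _
  have term1 : ∫⁻ z, ENNReal.ofReal (g z) ^ α ∂γ
      = ENNReal.ofReal (ouSG n t (fun z => f z ^ α) y) := by
    have h1 : ∀ z : EuclideanSpace ℝ (Fin n),
        ENNReal.ofReal (g z) ^ α = ENNReal.ofReal (g z ^ α) := fun z =>
      ENNReal.ofReal_rpow_of_nonneg (hg0 z) hα0.le
    simp_rw [h1]
    rw [← ofReal_integral_eq_lintegral_ofReal hintf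
      (ae_of_all _ fun z => Real.rpow_nonneg (hg0 z) α)]
    rfl
  have term2 : ∫⁻ z, ENNReal.ofReal (ρ z) ^ q ∂γ
      = ENNReal.ofReal (rexp ((q^2 - q) * ‖v‖^2 / 2)) := by
    have h1 : ∀ z : EuclideanSpace ℝ (Fin n), ENNReal.ofReal (ρ z) ^ q
        = ENNReal.ofReal (rexp (-(q * ‖v‖^2/2))) * ENNReal.ofReal (rexp ⟪(-q) • v, z⟫) := by
      intro z
      rw [ENNReal.ofReal_rpow_of_nonneg (hρ0 z) hq0.le, ← ENNReal.ofReal_mul (by positivity)]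
      congr 1
      simp only [hρ_def]
      have hin : (⟪(-q) • v, z⟫ : ℝ) = (-q) * ⟪v, z⟫ := real_inner_smul_left v z (-q)
      rw [hin, ← Real.exp_mul, ← Real.exp_add]
      congr 1
      ring
    simp_rw [h1]
    rw [lintegral_const_mul _ (((meas_inner_r n ((-q) • v)).exp).ennreal_ofReal),
      lintegral_exp_inner n ((-q) • v), ← ENNReal.ofReal_mul (by positivity), ← Real.exp_add]
    congr 2
    have hnq : ‖(-q) • v‖ = ‖(-q : ℝ)‖ * ‖v‖ := norm_smul (-q) v
    rw [hnq, Real.norm_eq_abs, abs_neg, abs_of_pos hq0]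
    ring
  have main : ENNReal.ofReal (ouSG n t f x)
      ≤ ENNReal.ofReal (ouSG n t (fun z => f z ^ α) y) ^ (1/α)
        * ENNReal.ofReal (rexp ((q - 1) * ‖v‖^2 / 2)) := by
    have hintf0 : Integrable (fun z => f (rexp (-t) • x + s • z)) γ := by
      refine Integrable.mono' (integrable_const C) ?_ (ae_of_all _ fun z => ?_)
      · exact (hf.comp ((measurable_id.const_smul s).const_add _)).aestronglyMeasurable
      · rw [Real.norm_of_nonneg (hf0 _)]; exact hfC _
    have hA : ENNReal.ofReal (ouSG n t f x)
        = ∫⁻ z, ENNReal.ofReal (f (rexp (-t) • x + s • z)) ∂γ := by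
      rw [ouSG]
      exact ofReal_integral_eq_lintegral_ofReal hintf0 (ae_of_all _ fun z => hf0 _)
    rw [hA, key]
    refine le_trans holder ?_
    rw [term1, term2]
    apply mul_le_mul_right (le_of_eq ?_)
    rw [ENNReal.ofReal_rpow_of_nonneg (Real.exp_pos _).le (by positivity), ← Real.exp_mul]
    congr 2
    field_simp
  have main2 : ENNReal.ofReal ((ouSG n t f x) ^ α)
      ≤ ENNReal.ofReal (ouSG n t (fun z => f z ^ α) y
          * rexp (α * ((q - 1) * ‖v‖^2 / 2))) := by
    have hA0 : 0 ≤ ouSG n t f x := integral_nonneg fun z => hf0 _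
    have h3 := ENNReal.rpow_le_rpow main hα0.le
    rw [ENNReal.mul_rpow_of_nonneg _ _ hα0.le, ← ENNReal.rpow_mul,
      one_div, inv_mul_cancel₀ (ne_of_gt hα0), ENNReal.rpow_one] at h3
    rw [← ENNReal.ofReal_rpow_of_nonneg hA0 hα0.le]
    refine le_trans h3 (le_of_eq ?_)
    rw [ENNReal.ofReal_rpow_of_nonneg (Real.exp_pos _).le hα0.le, ← Real.exp_mul,
      ← ENNReal.ofReal_mul hB0]
    congr 2
    ring
  have final : (ouSG n t f x) ^ α
      ≤ ouSG n t (fun z => f z ^ α) y * rexp (α * ((q - 1) * ‖v‖^2 / 2)) := by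
    refine (ENNReal.ofReal_le_ofReal_iff ?_).mp main2
    positivity
  refine le_trans final (le_of_eq ?_)
  have he1 : rexp (-2*t) * rexp (2*t) = 1 := by
    rw [← Real.exp_add]; norm_num
  have he2 : (0:ℝ) < rexp (2*t) - 1 := by
    have h4 : rexp 0 < rexp (2*t) := Real.exp_lt_exp.mpr (by linarith)
    rw [Real.exp_zero] at h4; linarith
  have hee : rexp (-t) ^ 2 = rexp (-2*t) := by
    rw [sq, ← Real.exp_add]; norm_num; ring_nf
  have hvnorm : ‖v‖^2 = ‖x - y‖^2 / (rexp (2*t) - 1) := by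
    rw [hv_def, norm_smul, Real.norm_eq_abs, abs_of_pos (by positivity), mul_pow,
      norm_sub_rev, div_pow, hee, hs2]
    rw [div_mul_eq_mul_div, div_eq_div_iff (ne_of_gt hs3) (ne_of_gt he2)]
    linear_combination ‖x - y‖^2 * he1
  have hexp2 : α * ((q - 1) * ‖v‖^2 / 2)
      = α * ‖x - y‖ ^ 2 / (2 * (α - 1) * (rexp (2 * t) - 1)) := by
    have h5 : (α - 1) ≠ 0 := ne_of_gt hα1
    have h6 : (rexp (2*t) - 1) ≠ 0 := ne_of_gt he2
    rw [hvnorm, hqm1]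
    field_simp
    try ring
    try simp
  rw [hexp2]
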